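/- Let λ ≥ 0 and let f ∈ M_σ^λ(φ) have Taylor coefficients aₙ. If (1+λ)B₁ ≥ |B₁² + (1+λ)(B₁−B₂)|, then |a₂| ≤ B₁/(1+λ). -/

import Mathlib

/-!
The left-hand side of the subordination `λ(1 + z f''/f') + (1 - λ) z f'/f = φ ∘ ω` extends
analytically across `0` with value `1` there. Comparing first derivatives at `0` gives
`(1 + λ) a₂ = φ'(0) ω'(0) = B₁ ω'(0)`, and the Schwarz lemma gives `‖ω'(0)‖ ≤ 1`.
-/

open Metric Set

noncomputable section

/-- `f` is bi-univalent on the unit disk, with `g` the univalent analytic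
continuation of `f⁻¹` to the unit disk. -/
def IsBiUnivalent (f g : ℂ → ℂ) : Prop :=
  DifferentiableOn ℂ f (ball 0 1) ∧ f 0 = 0 ∧ deriv f 0 = 1 ∧
  Set.InjOn f (ball 0 1) ∧
  DifferentiableOn ℂ g (ball 0 1) ∧ Set.InjOn g (ball 0 1) ∧
  ∀ w : ℂ, ‖w‖ < 1/4 → f (g w) = w

/-- `φ` is an analytic univalent function on the unit disk with positive real
part there, normalized by `φ 0 = 1`. -/
def IsMaMinda (φ : ℂ → ℂ) : Prop :=
  DifferentiableOn ℂ φ (ball 0 1) ∧ Set.InjOn φ (ball 0 1) ∧ φ 0 = 1 ∧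
  ∀ z ∈ ball (0:ℂ) 1, 0 < (φ z).re

/-- Membership in `M^λ(φ)`: `f` is normalized analytic on the unit disk and
`λ(1 + z f''(z)/f'(z)) + (1-λ) z f'(z)/f(z) ≺ φ(z)`. -/
def MemMlam (lam : ℝ) (φ f : ℂ → ℂ) : Prop :=
  DifferentiableOn ℂ f (ball 0 1) ∧ f 0 = 0 ∧ deriv f 0 = 1 ∧
  ∃ ω : ℂ → ℂ, DifferentiableOn ℂ ω (ball 0 1) ∧ ω 0 = 0 ∧
    (∀ z ∈ ball (0:ℂ) 1, ω z ∈ ball (0:ℂ) 1) ∧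
    ∀ z ∈ ball (0:ℂ) 1, z ≠ 0 →
      (lam : ℂ) * (1 + z * iteratedDeriv 2 f z / deriv f z)
        + (1 - (lam : ℂ)) * (z * deriv f z / f z) = φ (ω z)

open Filter Topology

section

variable {𝕜 : Type*} [NontriviallyNormedField 𝕜] {f : 𝕜 → 𝕜}

theorem deriv_deriv_eq_iteratedDeriv_two : deriv (deriv f) = iteratedDeriv 2 f := by
  rw [iteratedDeriv_succ, iteratedDeriv_one]

theorem mul_deriv_div_eq_deriv_div_dslope (hf0 : f 0 = 0) {z : 𝕜} (hz : z ≠ 0) :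
    z * deriv f z / f z = deriv f z / dslope f 0 z := by
  have hf := sub_smul_dslope f 0 z
  rw [sub_zero, hf0, sub_zero, smul_eq_mul] at hf
  rw [← hf, mul_div_mul_left _ _ hz]

/-- The left-hand side of the subordination in `MemMlam`, with `z f'(z) / f(z)` written as
`f'(z) / dslope f 0 z`, which agrees with it off `0` and is analytic at `0`. -/
def mlamOp (lam : 𝕜) (f : 𝕜 → 𝕜) (z : 𝕜) : 𝕜 :=
  lam * (1 + z * iteratedDeriv 2 f z / deriv f z) + (1 - lam) * (deriv f z / dslope f 0 z)

theorem mlamOp_zero (lam : 𝕜) (hf1 : deriv f 0 = 1) : mlamOp lam f 0 = 1 := by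
  simp [mlamOp, dslope_same, hf1]

theorem mlamOp_of_ne_zero (lam : 𝕜) (hf0 : f 0 = 0) {z : 𝕜} (hz : z ≠ 0) :
    mlamOp lam f z =
      lam * (1 + z * iteratedDeriv 2 f z / deriv f z) + (1 - lam) * (z * deriv f z / f z) := by
  rw [mlamOp, mul_deriv_div_eq_deriv_div_dslope hf0 hz]

variable [CompleteSpace 𝕜] [CharZero 𝕜]

theorem AnalyticAt.hasDerivAt_dslope {x : 𝕜} (hf : AnalyticAt 𝕜 f x) :
    HasDerivAt (dslope f x) (iteratedDeriv 2 f x / 2) x := by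
  simpa [FormalMultilinearSeries.apply_eq_prod_smul_coeff, FormalMultilinearSeries.coeff_fslope,
    FormalMultilinearSeries.coeff_ofScalars] using
    hf.hasFPowerSeriesAt.has_fpower_series_dslope_fslope.hasDerivAt

theorem AnalyticAt.hasDerivAt_mul_iteratedDeriv_two_div_deriv (hf : AnalyticAt 𝕜 f 0)
    (hf1 : deriv f 0 = 1) :
    HasDerivAt (fun z => z * iteratedDeriv 2 f z / deriv f z) (iteratedDeriv 2 f 0) 0 := by
  rw [← deriv_deriv_eq_iteratedDeriv_two]
  refine (((hasDerivAt_id 0).mul hf.deriv.deriv.differentiableAt.hasDerivAt).div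
    hf.deriv.differentiableAt.hasDerivAt (by simp [hf1])).congr_deriv ?_
  simp [hf1]

theorem AnalyticAt.hasDerivAt_deriv_div_dslope (hf : AnalyticAt 𝕜 f 0) (hf1 : deriv f 0 = 1) :
    HasDerivAt (fun z => deriv f z / dslope f 0 z) (iteratedDeriv 2 f 0 / 2) 0 := by
  refine (hf.deriv.differentiableAt.hasDerivAt.div hf.hasDerivAt_dslope
    (by simp [dslope_same, hf1])).congr_deriv ?_
  rw [dslope_same, hf1, deriv_deriv_eq_iteratedDeriv_two]
  ring

theorem AnalyticAt.hasDerivAt_mlamOp (lam : 𝕜) (hf : AnalyticAt 𝕜 f 0) (hf1 : deriv f 0 = 1) :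
    HasDerivAt (mlamOp lam f) ((1 + lam) * (iteratedDeriv 2 f 0 / 2)) 0 := by
  have hfirst := (hasDerivAt_const 0 1).add (hf.hasDerivAt_mul_iteratedDeriv_two_div_deriv hf1)
  refine ((hfirst.const_mul lam).add
    ((hf.hasDerivAt_deriv_div_dslope hf1).const_mul (1 - lam))).congr_deriv ?_
  ring

end

theorem MemMlam.one_add_mul_norm_iteratedDeriv_two_le {lam : ℝ} {φ f : ℂ → ℂ}
    (hlam : 0 ≤ lam) (hφ : DifferentiableAt ℂ φ 0) (hφ0 : φ 0 = 1) (hf : MemMlam lam φ f) :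
    (1 + lam) * ‖iteratedDeriv 2 f 0 / 2‖ ≤ ‖deriv φ 0‖ := by
  obtain ⟨hfd, hf0, hf1, ω, hωd, hω0, hωmap, hsub⟩ := hf
  have hball : ball (0 : ℂ) 1 ∈ 𝓝 0 := ball_mem_nhds 0 one_pos
  have hop : mlamOp (lam : ℂ) f =ᶠ[𝓝 0] φ ∘ ω := by
    filter_upwards [hball] with z hz
    rcases eq_or_ne z 0 with rfl | hz0
    · simp [mlamOp_zero _ hf1, hω0, hφ0]
    · rw [mlamOp_of_ne_zero _ hf0 hz0, hsub z hz hz0, Function.comp_apply]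
  have key : (1 + lam) * (iteratedDeriv 2 f 0 / 2) = deriv φ 0 * deriv ω 0 := by
    rw [← ((hfd.analyticAt hball).hasDerivAt_mlamOp _ hf1).deriv, hop.deriv_eq,
      deriv_comp 0 (by rwa [hω0]) (hωd.differentiableAt hball), hω0]
  have schwarz : ‖deriv ω 0‖ ≤ 1 :=
    Complex.norm_deriv_le_one_of_mapsTo_ball hωd
      (fun z hz => by rw [hω0]; exact ball_subset_closedBall (hωmap z hz)) one_pos
  calc (1 + lam) * ‖iteratedDeriv 2 f 0 / 2‖ = ‖deriv φ 0‖ * ‖deriv ω 0‖ := by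
        rw [← norm_mul, ← key, norm_mul, ← Complex.ofReal_one, ← Complex.ofReal_add,
          Complex.norm_of_nonneg (by positivity)]
    _ ≤ ‖deriv φ 0‖ := mul_le_of_le_one_right (norm_nonneg _) schwarz

theorem stmt_9_general
    (lam : ℝ) (hlam : 0 ≤ lam) (φ f : ℂ → ℂ)
    (B₁ : ℝ) (hB₁ : 0 < B₁)
    (hφ : IsMaMinda φ)
    (hφ1 : deriv φ 0 = (B₁:ℂ))
    (hf : MemMlam lam φ f)
    (a : ℕ → ℂ) (ha : ∀ n, a n = iteratedDeriv n f 0 / (n.factorial : ℂ)) :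
    ‖a 2‖ ≤ B₁ / (1 + lam) := by
  have hbound := hf.one_add_mul_norm_iteratedDeriv_two_le hlam
    (hφ.1.differentiableAt (ball_mem_nhds 0 one_pos)) hφ.2.2.1
  rw [hφ1, Complex.norm_of_nonneg hB₁.le] at hbound
  rw [le_div_iff₀ (by positivity), mul_comm, ha 2]
  simpa [Nat.factorial] using hbound

theorem stmt_9
    (lam : ℝ) (hlam : 0 ≤ lam) (φ f g : ℂ → ℂ)
    (B₁ : ℝ) (B₂ B₃ : ℂ) (hB₁ : 0 < B₁)
    (hφ : IsMaMinda φ)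
    (hφ1 : deriv φ 0 = (B₁:ℂ))
    (hφ2 : iteratedDeriv 2 φ 0 = 2 * B₂)
    (hφ3 : iteratedDeriv 3 φ 0 = 6 * B₃)
    (hbi : IsBiUnivalent f g)
    (hf : MemMlam lam φ f) (hg : MemMlam lam φ g)
    (a : ℕ → ℂ) (ha : ∀ n, a n = iteratedDeriv n f 0 / (n.factorial : ℂ))
    (D₁ : ℂ) (hD₁ : D₁ = (B₁:ℂ)^2 + (1 + (lam:ℂ)) * ((B₁:ℂ) - B₂))
    (hcond : ‖D₁‖ ≤ (1 + lam) * B₁) :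
    ‖a 2‖ ≤ B₁ / (1 + lam) :=
  stmt_9_general lam hlam φ f B₁ hB₁ hφ hφ1 hf a ha
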